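/- For n = 1 the mod 2 crossing-similarity relation ∼_{cr,2} on M(n) has exactly one equivalence class, and for every n ≥ 2 it has exactly two equivalence classes, whose cardinalities are ((2n−1)!! + 1)/2 and ((2n−1)!! − 1)/2, where (2n−1)!! = 1·3·5···(2n−1). -/
import Mathlib


/-- Number of crossings of a matching given by its set of edges `(a, b)` with `a < b`:
unordered pairs of edges `e, f` with `min e < min f < max e < max f`. -/
def crStat (s : Finset (ℕ × ℕ)) : ℕ :=
  ((s ×ˢ s).filter fun p => p.1.1 < p.2.1 ∧ p.2.1 < p.1.2 ∧ p.1.2 < p.2.2).card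

/-- Number of nestings: unordered pairs of edges `e, f` with `min e < min f < max f < max e`. -/
def neStat (s : Finset (ℕ × ℕ)) : ℕ :=
  ((s ×ˢ s).filter fun p => p.1.1 < p.2.1 ∧ p.2.2 < p.1.2).card

/-- Number of camels (separated pairs): unordered pairs of edges `e, f` with `max e < min f`. -/
def caStat (s : Finset (ℕ × ℕ)) : ℕ :=
  ((s ×ˢ s).filter fun p => p.1.2 < p.2.1).card

/-- `s` is the edge set of a matching on `[2n] = {1, …, 2n}`: `n` edges `(a, b)` with
`a < b`, and every vertex of `[2n]` belongs to exactly one edge. -/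
def IsMatching (n : ℕ) (s : Finset (ℕ × ℕ)) : Prop :=
  s.card = n ∧
  (∀ e ∈ s, e.1 < e.2 ∧ 1 ≤ e.1 ∧ e.2 ≤ 2 * n) ∧
  (∀ v : ℕ, 1 ≤ v → v ≤ 2 * n → ∃! e, e ∈ s ∧ (v = e.1 ∨ v = e.2))

/-- The order isomorphism `[2n] → {2, …, 2n+2} \ {x}`. -/
def shiftV (x v : ℕ) : ℕ := if v + 1 < x then v + 1 else v + 2

/-- The matching on `[2n+2]` obtained from a matching on `[2n]` by relabeling its vertices
order-isomorphically as `{2, …, 2n+2} \ {x}` and adding the new first edge `{1, x}`. -/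
def addFirst (x : ℕ) (s : Finset (ℕ × ℕ)) : Finset (ℕ × ℕ) :=
  insert (1, x) (s.image fun e => (shiftV x e.1, shiftV x e.2))

/-- All matchings obtained from `s` by adding a new first edge in all possible ways. -/
def childrenM (s : Finset (ℕ × ℕ)) : Multiset (Finset (ℕ × ℕ)) :=
  (Finset.Icc 2 (2 * s.card + 2)).val.map fun x => addFirst x s

/-- `levelM s l` is the multiset `T(s, l)` of matchings obtained from `s` by `l` successive
additions of a new first edge in all possible ways. -/
def levelM (s : Finset (ℕ × ℕ)) : ℕ → Multiset (Finset (ℕ × ℕ))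
  | 0 => {s}
  | l + 1 => (levelM s l).bind childrenM

/-- Mod 2 crossing-similarity: `M ∼_{cr,2} N` iff the multisets `{cr(K) mod 2 : K ∈ T(M,l)}`
and `{cr(K) mod 2 : K ∈ T(N,l)}` are equal for every `l ≥ 0`. -/
def CrSim2 (M N : Finset (ℕ × ℕ)) : Prop :=
  ∀ l : ℕ, (levelM M l).map (fun K => crStat K % 2) = (levelM N l).map (fun K => crStat K % 2)

open Finset

lemma shiftV_lt_iff (x a b : ℕ) : shiftV x a < shiftV x b ↔ a < b := by
  unfold shiftV; split <;> split <;> omega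

lemma shiftV_inj (x : ℕ) : Function.Injective (shiftV x) := by
  intro a b h; unfold shiftV at h; revert h; split <;> split <;> omega

lemma one_le_shiftV (x v : ℕ) : 1 ≤ shiftV x v := by unfold shiftV; split <;> omega

lemma two_le_shiftV (x v : ℕ) (hv : 1 ≤ v) : 2 ≤ shiftV x v := by
  unfold shiftV; split <;> omega

lemma shiftV_ne (x v : ℕ) : shiftV x v ≠ x := by unfold shiftV; split <;> omega

lemma shiftV_lt_x_iff (x v : ℕ) : shiftV x v < x ↔ v + 1 < x := by
  unfold shiftV; split <;> omega

lemma x_lt_shiftV_iff (x v : ℕ) : x < shiftV x v ↔ x ≤ v + 1 := by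
  unfold shiftV; split <;> omega

lemma shiftV_le (x v : ℕ) : shiftV x v ≤ v + 2 := by unfold shiftV; split <;> omega

lemma shiftE_inj (x : ℕ) : Function.Injective (fun e : ℕ × ℕ => (shiftV x e.1, shiftV x e.2)) := by
  intro a b h
  simp only [Prod.mk.injEq] at h
  exact Prod.ext (shiftV_inj x h.1) (shiftV_inj x h.2)

lemma crStat_eq_sum (s : Finset (ℕ × ℕ)) :
    crStat s = ∑ e ∈ s, ∑ f ∈ s,
      if e.1 < f.1 ∧ f.1 < e.2 ∧ e.2 < f.2 then 1 else 0 := by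
  rw [crStat, Finset.card_filter, Finset.sum_product]

lemma crStat_image_shift (x : ℕ) (s : Finset (ℕ × ℕ)) :
    crStat (s.image fun e => (shiftV x e.1, shiftV x e.2)) = crStat s := by
  rw [crStat_eq_sum, crStat_eq_sum, Finset.sum_image (fun a _ b _ h => shiftE_inj x h)]
  refine Finset.sum_congr rfl fun e _ => ?_
  rw [Finset.sum_image (fun a _ b _ h => shiftE_inj x h)]
  refine Finset.sum_congr rfl fun f _ => ?_
  simp only [shiftV_lt_iff]

lemma notmem_image_shift (x : ℕ) (s : Finset (ℕ × ℕ)) :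
    (1, x) ∉ s.image fun e => (shiftV x e.1, shiftV x e.2) := by
  intro h
  obtain ⟨e, -, he⟩ := Finset.mem_image.1 h
  exact shiftV_ne x e.2 (congrArg Prod.snd he)

lemma crStat_addFirst (x : ℕ) (s : Finset (ℕ × ℕ)) (hs : ∀ e ∈ s, 1 ≤ e.1) :
    crStat (addFirst x s) = crStat s + (s.filter fun e => e.1 + 1 < x ∧ x ≤ e.2 + 1).card := by
  rw [addFirst, crStat_eq_sum, Finset.sum_insert (notmem_image_shift x s), Finset.sum_insert (notmem_image_shift x s)]
  have hfirst : ∑ f ∈ s.image (fun e => (shiftV x e.1, shiftV x e.2)),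
      (if (1, x).1 < f.1 ∧ f.1 < (1, x).2 ∧ (1, x).2 < f.2 then 1 else 0)
      = (s.filter fun e => e.1 + 1 < x ∧ x ≤ e.2 + 1).card := by
    rw [Finset.card_filter]
    rw [Finset.sum_image (fun a _ b _ h => shiftE_inj x h)]
    refine Finset.sum_congr rfl fun e he => ?_
    congr 1
    simp only [eq_iff_iff]
    have h2 := two_le_shiftV x e.1 (hs e he)
    rw [shiftV_lt_x_iff, x_lt_shiftV_iff]
    constructor
    · rintro ⟨-, h1, h2⟩; omega
    · rintro ⟨h1, h3⟩; exact ⟨by omega, by omega, by omega⟩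
  have hself : (if (1, x).1 < (1, x).1 ∧ (1, x).1 < (1, x).2 ∧ (1, x).2 < (1, x).2 then (1:ℕ) else 0) = 0 := by
    simp
  have hsecond : ∀ e ∈ s.image fun e => (shiftV x e.1, shiftV x e.2),
      (∑ f ∈ insert (1, x) (s.image fun e => (shiftV x e.1, shiftV x e.2)),
        if e.1 < f.1 ∧ f.1 < e.2 ∧ e.2 < f.2 then 1 else 0)
      = ∑ f ∈ s.image (fun e => (shiftV x e.1, shiftV x e.2)),
        if e.1 < f.1 ∧ f.1 < e.2 ∧ e.2 < f.2 then 1 else 0 := by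
    intro e he
    rw [Finset.sum_insert (notmem_image_shift x s)]
    obtain ⟨e', -, rfl⟩ := Finset.mem_image.1 he
    have h1 := one_le_shiftV x e'.1
    have : ¬ (shiftV x e'.1 < (1, x).1 ∧ (1,x).1 < shiftV x e'.2 ∧ shiftV x e'.2 < (1,x).2) := by
      rintro ⟨h, -⟩; simp at h; omega
    rw [if_neg this, zero_add]
  rw [hself, zero_add, hfirst, Finset.sum_congr rfl hsecond]
  have : (∑ e ∈ s.image (fun e => (shiftV x e.1, shiftV x e.2)),
      ∑ f ∈ s.image (fun e => (shiftV x e.1, shiftV x e.2)),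
        if e.1 < f.1 ∧ f.1 < e.2 ∧ e.2 < f.2 then 1 else 0) = crStat s := by
    rw [← crStat_eq_sum, crStat_image_shift]
  omega

lemma straddle_parity {n : ℕ} {s : Finset (ℕ × ℕ)} (hm : IsMatching n s)
    {x : ℕ} (hx2 : 2 ≤ x) (hxn : x ≤ 2 * n + 2) :
    (s.filter fun e => e.1 + 1 < x ∧ x ≤ e.2 + 1).card % 2 = x % 2 := by
  obtain ⟨hcard, hedge, hcover⟩ := hm
  classical
  set A := s.filter (fun e => e.1 + 2 ≤ x) with hA
  set B := s.filter (fun e => e.2 + 2 ≤ x) with hB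
  -- the target filter equals A.filter ¬Q
  have htarget : (s.filter fun e => e.1 + 1 < x ∧ x ≤ e.2 + 1)
      = A.filter (fun e => ¬ (e.2 + 2 ≤ x)) := by
    rw [hA, Finset.filter_filter]
    refine Finset.filter_congr fun e he => ?_
    constructor
    · rintro ⟨h1, h2⟩; exact ⟨by omega, by omega⟩
    · rintro ⟨h1, h2⟩; exact ⟨by omega, by omega⟩
  have hBA : A.filter (fun e => e.2 + 2 ≤ x) = B := by
    rw [hA, hB, Finset.filter_filter]
    refine Finset.filter_congr fun e he => ?_
    have := (hedge e he).1
    constructor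
    · rintro ⟨-, h⟩; exact h
    · intro h; exact ⟨by omega, h⟩
  have hsplit : B.card + (s.filter fun e => e.1 + 1 < x ∧ x ≤ e.2 + 1).card = A.card := by
    rw [htarget, ← hBA]
    exact Finset.card_filter_add_card_filter_not _
  -- |A| + |B| = x - 2 via the vertex count
  have hcoverset : Finset.Icc 1 (x - 2) = s.biUnion
      (fun e => ({e.1, e.2} : Finset ℕ) ∩ Finset.Icc 1 (x - 2)) := by
    ext v
    simp only [Finset.mem_biUnion, Finset.mem_inter, Finset.mem_Icc, Finset.mem_insert,
      Finset.mem_singleton]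
    constructor
    · rintro ⟨h1, h2⟩
      obtain ⟨e, ⟨hes, hev⟩, -⟩ := hcover v h1 (by omega)
      exact ⟨e, hes, by tauto, h1, h2⟩
    · rintro ⟨e, -, -, h⟩; exact h
  have hdisj : ∀ e ∈ s, ∀ f ∈ s, e ≠ f →
      Disjoint (({e.1, e.2} : Finset ℕ) ∩ Finset.Icc 1 (x - 2))
        (({f.1, f.2} : Finset ℕ) ∩ Finset.Icc 1 (x - 2)) := by
    intro e he f hf hef
    rw [Finset.disjoint_left]
    intro v hv hv'
    simp only [Finset.mem_inter, Finset.mem_insert, Finset.mem_singleton, Finset.mem_Icc] at hv hv'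
    obtain ⟨hve, h1, h2⟩ := hv
    obtain ⟨hvf, -, -⟩ := hv'
    obtain ⟨u, -, huniq⟩ := hcover v h1 (by omega)
    exact hef ((huniq e ⟨he, by tauto⟩).trans (huniq f ⟨hf, by tauto⟩).symm)
  have hcount : A.card + B.card = x - 2 := by
    have h1 : (Finset.Icc 1 (x - 2)).card = x - 2 := by
      rw [Nat.card_Icc]; omega
    rw [hcoverset, Finset.card_biUnion hdisj] at h1
    have h2 : ∀ e ∈ s, (({e.1, e.2} : Finset ℕ) ∩ Finset.Icc 1 (x - 2)).card
        = (if e.1 + 2 ≤ x then 1 else 0) + (if e.2 + 2 ≤ x then 1 else 0) := by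
      intro e he
      have hne : e.1 ≠ e.2 := Nat.ne_of_lt (hedge e he).1
      have h11 : 1 ≤ e.1 := (hedge e he).2.1
      have h12 : 1 ≤ e.2 := le_trans h11 (le_of_lt (hedge e he).1)
      have : ({e.1, e.2} : Finset ℕ) ∩ Finset.Icc 1 (x - 2)
          = ({e.1, e.2} : Finset ℕ).filter (fun v => v ∈ Finset.Icc 1 (x - 2)) := by
        rw [Finset.filter_mem_eq_inter, Finset.inter_comm]
      rw [this, Finset.card_filter, Finset.sum_insert (by simpa using hne),
        Finset.sum_singleton]
      simp only [Finset.mem_Icc]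
      congr 1
      · congr 1; simp only [eq_iff_iff]; omega
      · congr 1; simp only [eq_iff_iff]; omega
    rw [Finset.sum_congr rfl h2, Finset.sum_add_distrib] at h1
    rw [hA, hB, Finset.card_filter, Finset.card_filter]
    omega
  omega

lemma isMatching_addFirst {n : ℕ} {s : Finset (ℕ × ℕ)} (hm : IsMatching n s)
    {x : ℕ} (hx2 : 2 ≤ x) (hxn : x ≤ 2 * n + 2) :
    IsMatching (n + 1) (addFirst x s) := by
  obtain ⟨hcard, hedge, hcover⟩ := hm
  classical
  refine ⟨?_, ?_, ?_⟩
  · rw [addFirst, Finset.card_insert_of_notMem (notmem_image_shift x s),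
      Finset.card_image_of_injective _ (shiftE_inj x), hcard]
  · intro e he
    rw [addFirst, Finset.mem_insert] at he
    rcases he with rfl | he
    · exact ⟨by omega, le_refl 1, by omega⟩
    · obtain ⟨f, hf, rfl⟩ := Finset.mem_image.1 he
      obtain ⟨h1, h2, h3⟩ := hedge f hf
      refine ⟨(shiftV_lt_iff x _ _).2 h1, le_trans (by omega) (two_le_shiftV x f.1 h2), ?_⟩
      have := shiftV_le x f.2
      omega
  · intro v hv1 hv2
    rcases eq_or_ne v 1 with rfl | hne1
    · refine ⟨(1, x), ⟨Finset.mem_insert_self _ _, Or.inl rfl⟩, ?_⟩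
      rintro e ⟨he, hor⟩
      rw [addFirst, Finset.mem_insert] at he
      rcases he with rfl | he
      · rfl
      · obtain ⟨f, hf, rfl⟩ := Finset.mem_image.1 he
        have h1 := two_le_shiftV x f.1 (hedge f hf).2.1
        have h2 := two_le_shiftV x f.2 (le_trans (hedge f hf).2.1 (le_of_lt (hedge f hf).1))
        simp only at hor
        omega
    rcases eq_or_ne v x with hvx | hnex
    · refine ⟨(1, x), ⟨Finset.mem_insert_self _ _, Or.inr hvx⟩, ?_⟩
      rintro e ⟨he, hor⟩
      rw [addFirst, Finset.mem_insert] at he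
      rcases he with rfl | he
      · rfl
      · obtain ⟨f, hf, rfl⟩ := Finset.mem_image.1 he
        have h1 := shiftV_ne x f.1
        have h2 := shiftV_ne x f.2
        simp only at hor
        rcases hor with h | h
        · exact absurd (hvx ▸ h : x = shiftV x f.1).symm h1
        · exact absurd (hvx ▸ h : x = shiftV x f.2).symm h2
    -- v ∈ {2,…,2n+2} \ {x} : v = shiftV x w for w := if v < x then v - 1 else v - 2
    · set w := if v < x then v - 1 else v - 2 with hw
      have hvge2 : 2 ≤ v := by omega
      have hgw : shiftV x w = v := by
        rcases lt_or_gt_of_ne hnex with h | h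
        · have hww : w = v - 1 := by rw [hw, if_pos h]
          rw [hww]; unfold shiftV; rw [if_pos (by omega)]; omega
        · have hww : w = v - 2 := by rw [hw, if_neg (by omega)]
          rw [hww]; unfold shiftV; rw [if_neg (by omega)]; omega
      have hw1 : 1 ≤ w := by
        rcases lt_or_gt_of_ne hnex with h | h
        · rw [hw, if_pos h]; omega
        · rw [hw, if_neg (by omega)]; omega
      have hw2 : w ≤ 2 * n := by
        rcases lt_or_gt_of_ne hnex with h | h
        · rw [hw, if_pos h]; omega
        · rw [hw, if_neg (by omega)]; omega
      obtain ⟨e, ⟨hes, hev⟩, huniq⟩ := hcover w hw1 hw2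
      refine ⟨(shiftV x e.1, shiftV x e.2),
        ⟨Finset.mem_insert_of_mem (Finset.mem_image_of_mem _ hes), ?_⟩, ?_⟩
      · rcases hev with h | h
        · left; show v = shiftV x e.1; rw [← hgw, h]
        · right; show v = shiftV x e.2; rw [← hgw, h]
      · rintro f ⟨hf, hor⟩
        rw [addFirst, Finset.mem_insert] at hf
        rcases hf with rfl | hf
        · simp only at hor
          rcases hor with h | h
          · exact absurd h hne1
          · exact absurd h hnex
        · obtain ⟨g, hg, rfl⟩ := Finset.mem_image.1 hf
          simp only at hor
          have : g = e := by
            apply huniq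
            refine ⟨hg, ?_⟩
            rcases hor with h | h
            · left; have h2 : shiftV x w = shiftV x g.1 := by rw [hgw, h]
              exact shiftV_inj x h2
            · right; have h2 : shiftV x w = shiftV x g.2 := by rw [hgw, h]
              exact shiftV_inj x h2
          rw [this]

lemma crStat_addFirst_mod {n : ℕ} {s : Finset (ℕ × ℕ)} (hm : IsMatching n s)
    {x : ℕ} (hx2 : 2 ≤ x) (hxn : x ≤ 2 * n + 2) :
    crStat (addFirst x s) % 2 = (crStat s % 2 + x) % 2 := by
  rw [crStat_addFirst x s (fun e he => (hm.2.1 e he).2.1), Nat.add_mod,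
    straddle_parity hm hx2 hxn]
  omega

lemma mem_levelM_isMatching {n : ℕ} {s : Finset (ℕ × ℕ)} (hm : IsMatching n s) :
    ∀ l, ∀ K ∈ levelM s l, IsMatching (n + l) K := by
  intro l
  induction l with
  | zero => intro K hK; rw [levelM, Multiset.mem_singleton] at hK; rwa [hK]
  | succ l ih =>
    intro K hK
    rw [levelM, Multiset.mem_bind] at hK
    obtain ⟨J, hJ, hKJ⟩ := hK
    obtain ⟨x, hx, rfl⟩ := Multiset.mem_map.1 hKJ
    rw [← Finset.mem_def, Finset.mem_Icc] at hx
    have hJm := ih J hJ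
    have hc : J.card = n + l := hJm.1
    rw [hc] at hx
    have := isMatching_addFirst hJm hx.1 hx.2
    rwa [show n + (l + 1) = n + l + 1 by omega]

/-- canonical multiset of parities of children of a parity-`p` matching on `[2m]` -/
def canonP (m p : ℕ) : Multiset ℕ :=
  (Finset.Icc 2 (2 * m + 2)).val.map fun x => (p + x) % 2

lemma childrenM_parity {m : ℕ} {s : Finset (ℕ × ℕ)} (hm : IsMatching m s) :
    (childrenM s).map (fun K => crStat K % 2) = canonP m (crStat s % 2) := by
  rw [childrenM, canonP, Multiset.map_map, hm.1]
  refine Multiset.map_congr rfl fun x hx => ?_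
  rw [← Finset.mem_def, Finset.mem_Icc] at hx
  exact crStat_addFirst_mod hm hx.1 hx.2

lemma levelM_parity_eq : ∀ (l n : ℕ) (M N : Finset (ℕ × ℕ)), IsMatching n M →
    IsMatching n N → crStat M % 2 = crStat N % 2 →
    (levelM M l).map (fun K => crStat K % 2) = (levelM N l).map (fun K => crStat K % 2) := by
  intro l
  induction l with
  | zero => intro n M N _ _ h; simp only [levelM, Multiset.map_singleton, h]
  | succ l ih =>
    intro n M N hM hN h
    have key : ∀ (P : Finset (ℕ × ℕ)), IsMatching n P →
        (levelM P (l + 1)).map (fun K => crStat K % 2)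
        = ((levelM P l).map (fun K => crStat K % 2)).bind (canonP (n + l)) := by
      intro P hP
      rw [levelM, Multiset.map_bind, Multiset.bind_map]
      exact Multiset.bind_congr fun K hK => childrenM_parity (mem_levelM_isMatching hP l K hK)
    rw [key M hM, key N hN, ih n M N hM hN h]

lemma crSim2_of_parity {n : ℕ} {M N : Finset (ℕ × ℕ)} (hM : IsMatching n M)
    (hN : IsMatching n N) (h : crStat M % 2 = crStat N % 2) : CrSim2 M N :=
  fun l => levelM_parity_eq l n M N hM hN h

lemma parity_of_crSim2 {M N : Finset (ℕ × ℕ)} (h : CrSim2 M N) :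
    crStat M % 2 = crStat N % 2 := by
  have h0 := h 0
  simp only [levelM, Multiset.map_singleton, Multiset.singleton_inj] at h0
  exact h0

def unshiftV (x v : ℕ) : ℕ := if v < x then v - 1 else v - 2

lemma shiftV_unshiftV {x v : ℕ} (h2 : 2 ≤ v) (hne : v ≠ x) : shiftV x (unshiftV x v) = v := by
  unfold unshiftV shiftV; split <;> split <;> omega

lemma unshiftV_shiftV (x v : ℕ) (hv : 1 ≤ v) : unshiftV x (shiftV x v) = v := by
  unfold unshiftV shiftV
  repeat' split
  all_goals omega

lemma unshiftV_lt {x a b : ℕ} (ha : 2 ≤ a) (hab : a < b) (hax : a ≠ x) (hbx : b ≠ x) :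
    unshiftV x a < unshiftV x b := by
  unfold unshiftV; split <;> split <;> omega

lemma one_le_unshiftV {x v : ℕ} (h : 2 ≤ v) (hx : 2 ≤ x) (hne : v ≠ x) :
    1 ≤ unshiftV x v := by
  unfold unshiftV; split <;> omega

lemma unshiftV_le {x v n : ℕ} (h1 : v ≤ 2 * n + 2) (h2 : v ≠ x) (h3 : 2 ≤ v)
    (hx : x ≤ 2 * n + 2) : unshiftV x v ≤ 2 * n := by
  unfold unshiftV; split <;> omega

open Classical in
noncomputable def Mall (n : ℕ) : Finset (Finset (ℕ × ℕ)) :=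
  (Finset.Icc 1 (2 * n) ×ˢ Finset.Icc 1 (2 * n)).powerset.filter (IsMatching n)

open Classical in
noncomputable def Mset (n p : ℕ) : Finset (Finset (ℕ × ℕ)) :=
  (Mall n).filter (fun s => crStat s % 2 = p)

lemma mem_Mall {n : ℕ} {s : Finset (ℕ × ℕ)} : s ∈ Mall n ↔ IsMatching n s := by
  classical
  rw [Mall, Finset.mem_filter, Finset.mem_powerset]
  constructor
  · rintro ⟨-, h⟩; exact h
  · intro h
    refine ⟨fun e he => ?_, h⟩
    have h1 := h.2.1 e he
    rw [Finset.mem_product, Finset.mem_Icc, Finset.mem_Icc]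
    omega

lemma mem_Mset {n p : ℕ} {s : Finset (ℕ × ℕ)} :
    s ∈ Mset n p ↔ IsMatching n s ∧ crStat s % 2 = p := by
  classical
  rw [Mset, Finset.mem_filter, mem_Mall]

lemma prod_bij_Mset (n p : ℕ) :
    ((Finset.Icc 2 (2 * n + 2) ×ˢ Mall n).filter
      (fun q => (crStat q.2 + q.1) % 2 = p)).card = (Mset (n + 1) p).card := by
  classical
  apply Finset.card_bij (fun q _ => addFirst q.1 q.2)
  · intro q hq
    rw [Finset.mem_filter, Finset.mem_product, Finset.mem_Icc, mem_Mall] at hq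
    obtain ⟨⟨⟨hx2, hxn⟩, hs⟩, hpar⟩ := hq
    rw [mem_Mset]
    refine ⟨isMatching_addFirst hs hx2 hxn, ?_⟩
    rw [crStat_addFirst_mod hs hx2 hxn]
    omega
  · rintro ⟨x, s⟩ h1 ⟨x', s'⟩ h2 heq
    rw [Finset.mem_filter, Finset.mem_product, Finset.mem_Icc, mem_Mall] at h1 h2
    simp only at heq
    have hm1 : IsMatching (n + 1) (addFirst x s) :=
      isMatching_addFirst h1.1.2 h1.1.1.1 h1.1.1.2
    obtain ⟨e, he, huniq⟩ := hm1.2.2 1 (le_refl 1) (by omega)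
    have e1 : (1, x) = e := huniq _ ⟨Finset.mem_insert_self _ _, Or.inl rfl⟩
    have e2 : (1, x') = e := by
      apply huniq
      refine ⟨?_, Or.inl rfl⟩
      rw [heq]
      exact Finset.mem_insert_self _ _
    have hxx : x = x' := congrArg Prod.snd (e1.trans e2.symm)
    subst hxx
    have himg : s.image (fun e => (shiftV x e.1, shiftV x e.2))
        = s'.image (fun e => (shiftV x e.1, shiftV x e.2)) := by
      have h3 := congrArg (fun u => Finset.erase u (1, x)) heq
      simpa only [addFirst, Finset.erase_insert (notmem_image_shift x s),
        Finset.erase_insert (notmem_image_shift x s')] using h3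
    have : s = s' := Finset.image_injective (shiftE_inj x) himg
    rw [this]
  · intro t ht
    rw [mem_Mset] at ht
    obtain ⟨htm, htp⟩ := ht
    have hcard := htm.1
    have hedge := htm.2.1
    have hcover := htm.2.2
    obtain ⟨e0, ⟨he0t, he0v⟩, huniq0⟩ := hcover 1 (le_refl 1) (by omega)
    have he01 : e0.1 = 1 := by
      rcases he0v with h | h
      · exact h.symm
      · have := hedge e0 he0t; omega
    set x := e0.2 with hxdef
    have hx2 : 2 ≤ x := by have := hedge e0 he0t; omega
    have hxn : x ≤ 2 * n + 2 := by have := (hedge e0 he0t).2.2; omega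
    have he0 : e0 = (1, x) := Prod.ext he01 rfl
    obtain ⟨fx, hfx, huniqx⟩ := hcover x (by omega) (by omega)
    have hfx0 : (1, x) = fx := huniqx _ ⟨he0 ▸ he0t, Or.inr rfl⟩
    have herase : ∀ e ∈ t.erase (1, x),
        2 ≤ e.1 ∧ e.1 < e.2 ∧ e.2 ≤ 2 * n + 2 ∧ e.1 ≠ x ∧ e.2 ≠ x ∧ 2 ≤ e.2 := by
      intro e he
      have het := Finset.mem_of_mem_erase he
      have hne := Finset.ne_of_mem_erase he
      have hed := hedge e het
      have h21 : 2 ≤ e.1 := by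
        rcases Nat.lt_or_ge e.1 2 with h | h
        · exfalso
          have he1 : e.1 = 1 := by omega
          have : e = e0 := huniq0 e ⟨het, Or.inl he1.symm⟩
          exact hne (this.trans he0)
        · exact h
      have hne1 : e.1 ≠ x := by
        intro h
        have : e = fx := huniqx e ⟨het, Or.inl h.symm⟩
        exact hne (this.trans hfx0.symm)
      have hne2 : e.2 ≠ x := by
        intro h
        have : e = fx := huniqx e ⟨het, Or.inr h.symm⟩
        exact hne (this.trans hfx0.symm)
      exact ⟨h21, hed.1, by omega, hne1, hne2, by omega⟩
    set s := (t.erase (1, x)).image (fun e => (unshiftV x e.1, unshiftV x e.2)) with hsdef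
    have himg : s.image (fun e => (shiftV x e.1, shiftV x e.2)) = t.erase (1, x) := by
      rw [hsdef, Finset.image_image]
      have hcongr : ∀ e ∈ t.erase (1, x),
          ((fun e : ℕ × ℕ => (shiftV x e.1, shiftV x e.2)) ∘
            (fun e : ℕ × ℕ => (unshiftV x e.1, unshiftV x e.2))) e = id e := by
        intro e he
        obtain ⟨h1, h2, h3, h4, h5, h6⟩ := herase e he
        simp only [Function.comp, id]
        rw [shiftV_unshiftV h1 h4, shiftV_unshiftV h6 h5]
      rw [Finset.image_congr hcongr, Finset.image_id]
    have haddF : addFirst x s = t := by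
      rw [addFirst, himg, Finset.insert_erase (he0 ▸ he0t)]
    have hinjOn : Set.InjOn (fun e : ℕ × ℕ => (unshiftV x e.1, unshiftV x e.2))
        (t.erase (1, x)) := by
      intro a ha b hb hab
      obtain ⟨a1, a2, a3, a4, a5, a6⟩ := herase a ha
      obtain ⟨b1, b2, b3, b4, b5, b6⟩ := herase b hb
      simp only [Prod.mk.injEq] at hab
      have k1 : a.1 = b.1 := by
        have := congrArg (shiftV x) hab.1
        rwa [shiftV_unshiftV a1 a4, shiftV_unshiftV b1 b4] at this
      have k2 : a.2 = b.2 := by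
        have := congrArg (shiftV x) hab.2
        rwa [shiftV_unshiftV a6 a5, shiftV_unshiftV b6 b5] at this
      exact Prod.ext k1 k2
    have hsm : IsMatching n s := by
      refine ⟨?_, ?_, ?_⟩
      · rw [hsdef, Finset.card_image_of_injOn hinjOn,
          Finset.card_erase_of_mem (he0 ▸ he0t), hcard]
        omega
      · intro e' he'
        obtain ⟨e, he, rfl⟩ := Finset.mem_image.1 he'
        obtain ⟨h1, h2, h3, h4, h5, h6⟩ := herase e he
        exact ⟨unshiftV_lt h1 h2 h4 h5, one_le_unshiftV h1 hx2 h4, unshiftV_le h3 h5 h6 hxn⟩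
      · intro v hv1 hv2
        set u := shiftV x v with hudef
        have hu1 : 2 ≤ u := two_le_shiftV x v hv1
        have hu2 : u ≤ 2 * (n + 1) := by have := shiftV_le x v; omega
        have hux : u ≠ x := shiftV_ne x v
        obtain ⟨f, ⟨hft, hfv⟩, huniqf⟩ := hcover u (by omega) hu2
        have hfne : f ≠ (1, x) := by
          intro h
          rw [h] at hfv
          simp only at hfv
          omega
        have hf' : f ∈ t.erase (1, x) := Finset.mem_erase.2 ⟨hfne, hft⟩
        refine ⟨(unshiftV x f.1, unshiftV x f.2),
          ⟨Finset.mem_image_of_mem _ hf', ?_⟩, ?_⟩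
        · rcases hfv with h | h
          · left
            show v = unshiftV x f.1
            rw [← h, hudef, unshiftV_shiftV x v hv1]
          · right
            show v = unshiftV x f.2
            rw [← h, hudef, unshiftV_shiftV x v hv1]
        · rintro g' ⟨hg', hgv⟩
          obtain ⟨g, hg, rfl⟩ := Finset.mem_image.1 hg'
          obtain ⟨g1, g2, g3, g4, g5, g6⟩ := herase g hg
          have hmem := Finset.mem_of_mem_erase hg
          have : g = f := by
            apply huniqf
            refine ⟨hmem, ?_⟩
            simp only at hgv
            rcases hgv with h | h
            · left
              rw [hudef, h, shiftV_unshiftV g1 g4]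
            · right
              rw [hudef, h, shiftV_unshiftV g6 g5]
          rw [this]
    refine ⟨(x, s), ?_, haddF⟩
    rw [Finset.mem_filter, Finset.mem_product, Finset.mem_Icc, mem_Mall]
    refine ⟨⟨⟨hx2, hxn⟩, hsm⟩, ?_⟩
    have hmod := crStat_addFirst_mod hsm hx2 hxn
    rw [haddF] at hmod
    show (crStat s + x) % 2 = p
    omega

lemma card_even_Icc (n : ℕ) :
    ((Finset.Icc 2 (2 * n + 2)).filter (fun x => x % 2 = 0)).card = n + 1 := by
  classical
  have h : (Finset.Icc 2 (2 * n + 2)).filter (fun x => x % 2 = 0)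
      = (Finset.Icc 1 (n + 1)).image (fun k => 2 * k) := by
    ext y
    simp only [Finset.mem_filter, Finset.mem_Icc, Finset.mem_image]
    constructor
    · rintro ⟨⟨h1, h2⟩, h3⟩; exact ⟨y / 2, by omega, by omega⟩
    · rintro ⟨k, hk, rfl⟩; omega
  rw [h, Finset.card_image_of_injective _ (fun a b h => by omega), Nat.card_Icc]
  omega

lemma card_odd_Icc (n : ℕ) :
    ((Finset.Icc 2 (2 * n + 2)).filter (fun x => ¬ x % 2 = 0)).card = n := by
  classical
  have h : (Finset.Icc 2 (2 * n + 2)).filter (fun x => ¬ x % 2 = 0)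
      = (Finset.Icc 1 n).image (fun k => 2 * k + 1) := by
    ext y
    simp only [Finset.mem_filter, Finset.mem_Icc, Finset.mem_image]
    constructor
    · rintro ⟨⟨h1, h2⟩, h3⟩; exact ⟨y / 2, by omega, by omega⟩
    · rintro ⟨k, hk, rfl⟩; omega
  rw [h, Finset.card_image_of_injective _ (fun a b h => by omega), Nat.card_Icc]
  omega

lemma card_Mset_succ (n p q : ℕ) (hp : p < 2) (hq : q < 2) (hpq : p ≠ q) :
    (Mset (n + 1) p).card = (n + 1) * (Mset n p).card + n * (Mset n q).card := by
  classical
  rw [← prod_bij_Mset n p, Finset.card_filter, Finset.sum_product]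
  have inner : ∀ x ∈ Finset.Icc 2 (2 * n + 2),
      (∑ s ∈ Mall n, if (crStat s + x) % 2 = p then 1 else 0)
      = (Mset n ((p + x) % 2)).card := by
    intro x hx
    rw [Mset, Finset.card_filter]
    refine Finset.sum_congr rfl fun s hs => ?_
    congr 1
    simp only [eq_iff_iff]
    omega
  rw [Finset.sum_congr rfl inner,
    ← Finset.sum_filter_add_sum_filter_not (Finset.Icc 2 (2 * n + 2)) (fun x => x % 2 = 0)]
  have h1 : ∀ x ∈ (Finset.Icc 2 (2 * n + 2)).filter (fun x => x % 2 = 0),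
      (Mset n ((p + x) % 2)).card = (Mset n p).card := by
    intro x hx
    rw [Finset.mem_filter] at hx
    congr 2
    omega
  have h2 : ∀ x ∈ (Finset.Icc 2 (2 * n + 2)).filter (fun x => ¬ x % 2 = 0),
      (Mset n ((p + x) % 2)).card = (Mset n q).card := by
    intro x hx
    rw [Finset.mem_filter] at hx
    congr 2
    omega
  rw [Finset.sum_congr rfl h1, Finset.sum_congr rfl h2, Finset.sum_const, Finset.sum_const,
    card_even_Icc, card_odd_Icc, smul_eq_mul, smul_eq_mul]

lemma isMatching_single : IsMatching 1 {(1, 2)} := by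
  refine ⟨rfl, ?_, ?_⟩
  · intro e he
    rw [Finset.mem_singleton] at he
    subst he
    exact ⟨by norm_num, le_refl 1, by norm_num⟩
  · intro v h1 h2
    refine ⟨(1, 2), ⟨Finset.mem_singleton_self _, by simp; omega⟩, ?_⟩
    rintro e ⟨he, -⟩
    rwa [Finset.mem_singleton] at he

lemma isMatching_one {s : Finset (ℕ × ℕ)} : IsMatching 1 s ↔ s = {(1, 2)} := by
  constructor
  · intro h
    obtain ⟨hc, hedge, hcover⟩ := h
    obtain ⟨e, rfl⟩ := Finset.card_eq_one.1 hc
    have h1 := hedge e (Finset.mem_singleton_self e)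
    obtain ⟨f, ⟨hf, hfv⟩, -⟩ := hcover 1 (le_refl 1) (by omega)
    rw [Finset.mem_singleton] at hf
    subst hf
    have : f = (1, 2) := by
      apply Prod.ext <;> simp <;> omega
    rw [this]
  · rintro rfl
    exact isMatching_single

lemma crStat_single : crStat {(1, 2)} = 0 := by decide

lemma Mset_one_zero : Mset 1 0 = {({(1, 2)} : Finset (ℕ × ℕ))} := by
  ext s
  rw [mem_Mset, Finset.mem_singleton, isMatching_one]
  constructor
  · rintro ⟨rfl, -⟩; rfl
  · rintro rfl; exact ⟨rfl, by rw [crStat_single]⟩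

lemma Mset_one_one : Mset 1 1 = ∅ := by
  ext s
  rw [mem_Mset, isMatching_one]
  simp only [Finset.notMem_empty, iff_false, not_and]
  rintro rfl
  rw [crStat_single]
  omega

lemma dF_step (m : ℕ) (hm : 1 ≤ m) :
    Nat.doubleFactorial (2 * (m + 1) - 1) = (2 * m + 1) * Nat.doubleFactorial (2 * m - 1) := by
  have h : 2 * (m + 1) - 1 = (2 * m - 1) + 2 := by omega
  rw [h, Nat.doubleFactorial_add_two]
  congr 1
  omega

lemma Mset_card (n : ℕ) (hn : 1 ≤ n) :
    2 * (Mset n 0).card = Nat.doubleFactorial (2 * n - 1) + 1 ∧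
    2 * (Mset n 1).card + 1 = Nat.doubleFactorial (2 * n - 1) := by
  induction n with
  | zero => omega
  | succ m ih =>
    rcases Nat.eq_or_lt_of_le hn with h | h
    · have hm : m = 0 := by omega
      subst hm
      rw [Mset_one_zero, Mset_one_one]
      simp [Nat.doubleFactorial]
    · have hm : 1 ≤ m := by omega
      obtain ⟨ihe, iho⟩ := ih hm
      have h0 := card_Mset_succ m 0 1 (by omega) (by omega) (by omega)
      have h1 := card_Mset_succ m 1 0 (by omega) (by omega) (by omega)
      set a := (Mset m 0).card
      set b := (Mset m 1).card
      have ha : a = b + 1 := by omega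
      have hDb : Nat.doubleFactorial (2 * m - 1) = 2 * b + 1 := by omega
      rw [dF_step m hm, hDb]
      constructor
      · rw [h0, ha]; ring
      · rw [h1, ha]; ring

lemma dF_ge_three (n : ℕ) (hn : 2 ≤ n) : 3 ≤ Nat.doubleFactorial (2 * n - 1) := by
  induction n with
  | zero => omega
  | succ m ih =>
    rcases Nat.lt_or_ge m 2 with h | h
    · have : m = 1 := by omega
      subst this
      decide
    · rw [dF_step m (by omega)]
      have := ih h
      nlinarith

lemma natCard_class {n p : ℕ} {M : Finset (ℕ × ℕ)} (hM : IsMatching n M)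
    (hp : crStat M % 2 = p) :
    Nat.card {s : Finset (ℕ × ℕ) // IsMatching n s ∧ CrSim2 M s} = (Mset n p).card := by
  have e1 : {s : Finset (ℕ × ℕ) // IsMatching n s ∧ CrSim2 M s}
      ≃ {s : Finset (ℕ × ℕ) // s ∈ Mset n p} :=
    Equiv.subtypeEquivRight (fun s => by
      rw [mem_Mset]
      constructor
      · rintro ⟨hs, hsim⟩
        exact ⟨hs, by rw [← parity_of_crSim2 hsim, hp]⟩
      · rintro ⟨hs, hpar⟩
        exact ⟨hs, crSim2_of_parity hM hs (by rw [hp, hpar])⟩)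
  rw [Nat.card_congr e1, Nat.card_eq_finsetCard]

/-- `∼_{cr,2}` on `M(n)` has exactly one class for `n = 1` and exactly two
classes for `n ≥ 2`, of cardinalities `((2n-1)!! + 1)/2` and `((2n-1)!! - 1)/2` (stated
multiplied through by `2`). -/
theorem card_mod_two_crossingSimilarity_classes (n : ℕ) :
    (n = 1 →
      Nat.card (Quot (fun M N : {s : Finset (ℕ × ℕ) // IsMatching n s} => CrSim2 M.1 N.1))
        = 1) ∧
    (2 ≤ n →
      Nat.card (Quot (fun M N : {s : Finset (ℕ × ℕ) // IsMatching n s} => CrSim2 M.1 N.1))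
          = 2 ∧
      ∃ M₀ M₁ : Finset (ℕ × ℕ), IsMatching n M₀ ∧ IsMatching n M₁ ∧ ¬ CrSim2 M₀ M₁ ∧
        2 * Nat.card {s : Finset (ℕ × ℕ) // IsMatching n s ∧ CrSim2 M₀ s}
          = Nat.doubleFactorial (2 * n - 1) + 1 ∧
        2 * Nat.card {s : Finset (ℕ × ℕ) // IsMatching n s ∧ CrSim2 M₁ s}
          = Nat.doubleFactorial (2 * n - 1) - 1) := by
  constructor
  · rintro rfl
    rw [Nat.card_eq_one_iff_unique]
    constructor
    · constructor
      intro qa qb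
      induction qa using Quot.ind with | _ a =>
      induction qb using Quot.ind with | _ b =>
      have : a = b := Subtype.ext (by rw [isMatching_one.1 a.2, isMatching_one.1 b.2])
      rw [this]
    · exact ⟨Quot.mk _ ⟨{(1, 2)}, isMatching_single⟩⟩
  · intro hn
    have hD := dF_ge_three n hn
    obtain ⟨hE0, hE1⟩ := Mset_card n (by omega)
    have hE0pos : 0 < (Mset n 0).card := by omega
    have hE1pos : 0 < (Mset n 1).card := by omega
    obtain ⟨M0, hM0⟩ := Finset.card_pos.1 hE0pos
    obtain ⟨M1, hM1⟩ := Finset.card_pos.1 hE1pos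
    rw [mem_Mset] at hM0 hM1
    constructor
    · -- two classes
      have e : Quot (fun M N : {s : Finset (ℕ × ℕ) // IsMatching n s} => CrSim2 M.1 N.1)
          ≃ Bool := by
        refine ⟨Quot.lift (fun M => decide (crStat M.1 % 2 = 1))
          (fun a b h => by simp only [decide_eq_decide]; rw [parity_of_crSim2 h]),
          fun b => bif b then Quot.mk _ ⟨M1, hM1.1⟩ else Quot.mk _ ⟨M0, hM0.1⟩, ?_, ?_⟩
        · apply Quot.ind
          intro M
          rcases Nat.mod_two_eq_zero_or_one (crStat M.1) with h | h
          · have hd : decide (crStat M.1 % 2 = 1) = false := by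
              rw [decide_eq_false_iff_not]; omega
            show (bif decide (crStat M.1 % 2 = 1) then _ else _) = _
            rw [hd]
            show Quot.mk _ ⟨M0, hM0.1⟩ = Quot.mk _ M
            exact Quot.sound (crSim2_of_parity hM0.1 M.2 (by rw [hM0.2, h]))
          · have hd : decide (crStat M.1 % 2 = 1) = true := by
              rw [decide_eq_true_iff]; exact h
            show (bif decide (crStat M.1 % 2 = 1) then _ else _) = _
            rw [hd]
            show Quot.mk _ ⟨M1, hM1.1⟩ = Quot.mk _ M
            exact Quot.sound (crSim2_of_parity hM1.1 M.2 (by rw [hM1.2, h]))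
        · intro b
          cases b
          · show decide (crStat M0 % 2 = 1) = false
            rw [decide_eq_false_iff_not]; omega
          · show decide (crStat M1 % 2 = 1) = true
            rw [decide_eq_true_iff]; exact hM1.2
      rw [Nat.card_congr e]
      simp [Nat.card_eq_fintype_card]
    · refine ⟨M0, M1, hM0.1, hM1.1, ?_, ?_, ?_⟩
      · intro hsim
        have := parity_of_crSim2 hsim
        rw [hM0.2, hM1.2] at this
        omega
      · rw [natCard_class hM0.1 hM0.2]
        exact hE0
      · rw [natCard_class hM1.1 hM1.2]
        omega
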